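/- arXiv:1306.1185 — 4 statements merged into one kernel-verified Lean document; each statement's English description precedes it below -/
import Mathlib

section
/- Let A ⊆ V with k + 1 ≤ N where k = ⌊N/(λ+1)⌋, and let f = 1_A. Then ‖f − med_λ(f)·1‖_{1,λ} = min{λ|A|, |A^c|}. -/
/-- Asymmetric absolute value: `|t|_λ = λt` if `t ≥ 0` and `-t` if `t < 0`. -/
noncomputable def asymAbs (lam t : ℝ) : ℝ := if 0 ≤ t then lam * t else -t

/-- Asymmetric ℓ¹-norm: `‖f‖_{1,λ} = ∑ i, |f xᵢ|_λ`. -/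
noncomputable def asymNorm (N : ℕ) (lam : ℝ) (f : Fin N → ℝ) : ℝ := ∑ i, asymAbs lam (f i)

/-- The λ-median of `f`: the (k+1)-st largest entry (counted with multiplicity)
of the vector `(f x₁, …, f x_N)`, where `k = ⌊N/(λ+1)⌋`. -/
noncomputable def lamMedian (N : ℕ) (lam : ℝ) (f : Fin N → ℝ) : ℝ :=
  ((Finset.univ.val.map f).sort (· ≥ ·)).getD (Nat.floor ((N : ℝ) / (lam + 1))) 0

/-- Indicator function of `A`. -/
def indicatorFun (N : ℕ) (A : Finset (Fin N)) : Fin N → ℝ :=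
  fun i => if i ∈ A then 1 else 0

/-! The values of `1_A`, sorted decreasingly, are `|A|` ones followed by `|Aᶜ|` zeros, so the
λ-median is `1` exactly when `k < |A|`, i.e. when `N < (λ + 1)|A|`. In that case the norm is
`|Aᶜ| ≤ λ|A|`; otherwise it is `λ|A| ≤ |Aᶜ|`. -/

open Finset

theorem List.getD_replicate_append_replicate {α : Type*} (a b k : ℕ) (x y : α) :
    (replicate a x ++ replicate b y).getD k y = if k < a then x else y := by
  split_ifs with h
  · rw [getD_append _ _ _ _ (by simpa using h), getD_replicate x h]
  · rw [getD_append_right _ _ _ _ (by simpa using h)]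
    simp

theorem Multiset.sort_replicate_add_replicate {α : Type*} [LinearOrder α] {x y : α} (h : y ≤ x)
    (a b : ℕ) :
    (replicate a x + replicate b y).sort (· ≥ ·) = List.replicate a x ++ List.replicate b y := by
  rw [← coe_replicate, ← coe_replicate, coe_add, coe_sort]
  refine List.mergeSort_eq_self _ (List.pairwise_append.mpr ⟨?_, ?_, ?_⟩)
  · exact List.pairwise_replicate.mpr (Or.inr (by simp))
  · exact List.pairwise_replicate.mpr (Or.inr (by simp))
  · intro u hu v hv
    simpa [List.eq_of_mem_replicate hu, List.eq_of_mem_replicate hv] using h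

lemma map_univ_indicatorFun (N : ℕ) (A : Finset (Fin N)) :
    univ.val.map (indicatorFun N A) = Multiset.replicate #A 1 + Multiset.replicate #Aᶜ 0 := by
  rw [← union_compl A, ← disjUnion_eq_union _ _ disjoint_compl_right, disjUnion_val,
    Multiset.map_add]
  congr 1
  · rw [Multiset.map_congr (f := indicatorFun N A) (g := fun _ => 1) rfl fun _ hi => if_pos hi,
      Multiset.map_const', card_val]
  · rw [Multiset.map_congr (f := indicatorFun N A) (g := fun _ => 0) rfl
      fun _ hi => if_neg (mem_compl.mp hi), Multiset.map_const', card_val]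

lemma lamMedian_indicatorFun (N : ℕ) (lam : ℝ) (A : Finset (Fin N)) :
    lamMedian N lam (indicatorFun N A) = if ⌊(N : ℝ) / (lam + 1)⌋₊ < #A then 1 else 0 := by
  rw [lamMedian, map_univ_indicatorFun, Multiset.sort_replicate_add_replicate zero_le_one,
    List.getD_replicate_append_replicate]

lemma asymNorm_indicatorFun (N : ℕ) (lam : ℝ) (A : Finset (Fin N)) :
    asymNorm N lam (indicatorFun N A) = lam * #A := by
  have h (i : Fin N) : asymAbs lam (indicatorFun N A i) = if i ∈ A then lam else 0 := by
    by_cases hi : i ∈ A <;> simp [asymAbs, indicatorFun, hi]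
  simp only [asymNorm, h, sum_ite_mem, univ_inter, sum_const, nsmul_eq_mul, mul_comm]

lemma asymNorm_indicatorFun_sub_one (N : ℕ) (lam : ℝ) (A : Finset (Fin N)) :
    asymNorm N lam (fun i => indicatorFun N A i - 1) = #Aᶜ := by
  have h (i : Fin N) : asymAbs lam (indicatorFun N A i - 1) = if i ∈ Aᶜ then 1 else 0 := by
    by_cases hi : i ∈ A <;> simp [asymAbs, indicatorFun, hi]
  simp only [asymNorm, h, sum_ite_mem, univ_inter, sum_const, nsmul_eq_mul, mul_one]

theorem asymNorm_indicator_sub_median_general (N : ℕ) (lam : ℝ) (hlam : 0 < lam) (A : Finset (Fin N)) :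
    asymNorm N lam
        (fun i => indicatorFun N A i - lamMedian N lam (indicatorFun N A))
      = min (lam * (A.card : ℝ)) ((Aᶜ.card : ℝ)) := by
  have hcard : (#A : ℝ) + #Aᶜ = N := by
    exact_mod_cast (card_add_card_compl A).trans (Fintype.card_fin N)
  rw [lamMedian_indicatorFun]
  split_ifs with h <;> rw [Nat.floor_lt (by positivity), div_lt_iff₀ (by positivity)] at h
  · rw [asymNorm_indicatorFun_sub_one, min_eq_right (by linarith)]
  · simp only [sub_zero, asymNorm_indicatorFun]
    rw [min_eq_left (by linarith)]

/-- for `f = 1_A`, one has `‖f − med_λ(f)·1‖_{1,λ} = min{λ|A|, |Aᶜ|}`. -/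
theorem asymNorm_indicator_sub_median (N : ℕ) (hN : 0 < N) (lam : ℝ) (hlam : 0 < lam)
    (hk : Nat.floor ((N : ℝ) / (lam + 1)) + 1 ≤ N) (A : Finset (Fin N)) :
    asymNorm N lam
        (fun i => indicatorFun N A i - lamMedian N lam (indicatorFun N A))
      = min (lam * (A.card : ℝ)) ((Aᶜ.card : ℝ)) :=
  asymNorm_indicator_sub_median_general N lam hlam A
end

section
/- The balance functional B(f) := ‖f − med_λ(f)·1‖_{1,λ} is a convex function on ℝ^N. -/
/-- The balance functional `B(f) = ‖f − med_λ(f)·1‖_{1,λ}`. -/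
noncomputable def balanceFun (N : ℕ) (lam : ℝ) (f : Fin N → ℝ) : ℝ :=
  asymNorm N lam (fun i => f i - lamMedian N lam f)

/-!
The λ-median minimises `c ↦ ‖f − c·1‖_{1,λ}`: moving the centre from the median `m` to `c > m`
gains `c − m` on each of the at least `N − k` entries `≤ m` and loses at most `λ (c − m)` on each
of the at most `k` entries above `m`, and `k (λ + 1) ≤ N` makes the balance nonnegative; the case
`c < m` uses `N < (k + 1)(λ + 1)` symmetrically. Hence `B f = min_c ‖f − c·1‖_{1,λ}`, and since
`(f, c) ↦ ‖f − c·1‖_{1,λ}` is jointly convex, evaluating at the convex combination of the two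
medians gives `B (a f + b g) ≤ a B f + b B g`.
-/

open Finset

namespace List

variable {α : Type*} [LinearOrder α] {l : List α} {a : α} {k : ℕ}

lemma length_filter_lt_le_of_forall_mem_drop (h : ∀ x ∈ l.drop k, x ≤ a) :
    (l.filter (a < ·)).length ≤ k := by
  have htail : (l.drop k).filter (a < ·) = [] :=
    filter_eq_nil_iff.2 fun x hx => by simpa using h x hx
  calc (l.filter (a < ·)).length
      = ((l.take k).filter (a < ·)).length := by
        conv_lhs => rw [← take_append_drop k l, filter_append, htail, append_nil]
    _ ≤ k := (length_filter_le _ _).trans (length_take_le _ _)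

lemma le_length_filter_le_of_forall_mem_take (hk : k ≤ l.length) (h : ∀ x ∈ l.take k, a ≤ x) :
    k ≤ (l.filter (a ≤ ·)).length := by
  have hhead : (l.take k).filter (a ≤ ·) = l.take k :=
    filter_eq_self.2 fun x hx => by simpa using h x hx
  calc k = ((l.take k).filter (a ≤ ·)).length := by rw [hhead, length_take_of_le hk]
    _ ≤ (l.filter (a ≤ ·)).length := ((take_sublist k l).filter _).length_le

lemma Pairwise.getElem_le_getElem_of_le (hl : l.Pairwise (· ≥ ·)) {i j : ℕ} (hij : i ≤ j)
    (hj : j < l.length) : l[j] ≤ l[i] := by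
  rcases hij.eq_or_lt with rfl | hlt
  · exact le_rfl
  · exact pairwise_iff_getElem.1 hl i j _ hj hlt

lemma Pairwise.length_filter_getElem_lt_le (hl : l.Pairwise (· ≥ ·)) (hk : k < l.length) :
    (l.filter (l[k] < ·)).length ≤ k :=
  length_filter_lt_le_of_forall_mem_drop fun x hx => by
    obtain ⟨j, hj, rfl⟩ := mem_drop_iff_getElem.1 hx
    exact hl.getElem_le_getElem_of_le (Nat.le_add_right k j) _

lemma Pairwise.succ_le_length_filter_getElem_le (hl : l.Pairwise (· ≥ ·)) (hk : k < l.length) :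
    k + 1 ≤ (l.filter (l[k] ≤ ·)).length :=
  le_length_filter_le_of_forall_mem_take hk fun x hx => by
    obtain ⟨j, hj, rfl⟩ := mem_take_iff_getElem.1 hx
    exact hl.getElem_le_getElem_of_le (by omega) hk

end List

lemma Finset.card_filter_comp_eq_length_filter_sort {ι α : Type*} (s : Finset ι) (f : ι → α)
    (r : α → α → Prop) [DecidableRel r] [IsTrans α r] [Std.Antisymm r] [Std.Total r]
    (p : α → Prop) [DecidablePred p] :
    #{i ∈ s | p (f i)} = (((s.val.map f).sort r).filter p).length := by
  rw [← Multiset.coe_card, ← Multiset.filter_coe, Multiset.sort_eq, Multiset.filter_map,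
    Multiset.card_map]
  rfl

section lamMedian

variable {N : ℕ} {lam : ℝ} (f : Fin N → ℝ)

lemma lamMedian_eq_getElem (hk : ⌊(N : ℝ) / (lam + 1)⌋₊ < N) :
    lamMedian N lam f =
      ((univ.val.map f).sort (· ≥ ·))[⌊(N : ℝ) / (lam + 1)⌋₊]'(by simpa using hk) :=
  List.getD_eq_getElem _ _ _

lemma card_lamMedian_lt_le (hk : ⌊(N : ℝ) / (lam + 1)⌋₊ < N) :
    #{i | lamMedian N lam f < f i} ≤ ⌊(N : ℝ) / (lam + 1)⌋₊ := by
  rw [card_filter_comp_eq_length_filter_sort _ _ (· ≥ ·), lamMedian_eq_getElem f hk]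
  exact (Multiset.pairwise_sort _ _).length_filter_getElem_lt_le _

lemma succ_le_card_lamMedian_le (hk : ⌊(N : ℝ) / (lam + 1)⌋₊ < N) :
    ⌊(N : ℝ) / (lam + 1)⌋₊ + 1 ≤ #{i | lamMedian N lam f ≤ f i} := by
  rw [card_filter_comp_eq_length_filter_sort _ _ (· ≥ ·), lamMedian_eq_getElem f hk]
  exact (Multiset.pairwise_sort _ _).succ_le_length_filter_getElem_le _

end lamMedian

lemma asymAbs_eq_max {lam : ℝ} (hlam : -1 ≤ lam) (t : ℝ) :
    asymAbs lam t = max (lam * t) (-t) := by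
  unfold asymAbs
  split_ifs with ht
  · exact (max_eq_left (by nlinarith)).symm
  · exact (max_eq_right (by nlinarith)).symm

lemma convexOn_asymAbs {lam : ℝ} (hlam : -1 ≤ lam) : ConvexOn ℝ Set.univ (asymAbs lam) := by
  have hmax : asymAbs lam = ⇑(LinearMap.mulLeft ℝ lam) ⊔ ⇑(-LinearMap.id : ℝ →ₗ[ℝ] ℝ) := by
    ext t
    simp [asymAbs_eq_max hlam]
  rw [hmax]
  exact ((LinearMap.mulLeft ℝ lam).convexOn convex_univ).sup (LinearMap.convexOn _ convex_univ)

lemma convexOn_asymNorm (N : ℕ) {lam : ℝ} (hlam : -1 ≤ lam) :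
    ConvexOn ℝ Set.univ (asymNorm N lam) := by
  refine ⟨convex_univ, fun f _ g _ a b ha hb hab => ?_⟩
  calc asymNorm N lam (a • f + b • g)
      ≤ ∑ i, (a * asymAbs lam (f i) + b * asymAbs lam (g i)) :=
        sum_le_sum fun i _ => (convexOn_asymAbs hlam).2 trivial trivial ha hb hab
    _ = a * asymNorm N lam f + b * asymNorm N lam g := by
        rw [sum_add_distrib, ← mul_sum, ← mul_sum]; rfl

section Balance

variable {ι : Type*} (s : Finset ι) (x : ι → ℝ) {lam m c : ℝ}

lemma sum_asymAbs_sub_le_of_le (hlam : -1 ≤ lam) (hmc : m ≤ c)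
    (hbal : lam * #{i ∈ s | m < x i} ≤ #{i ∈ s | x i ≤ m}) :
    ∑ i ∈ s, asymAbs lam (x i - m) ≤ ∑ i ∈ s, asymAbs lam (x i - c) := by
  have hstep : ∀ i ∈ s, asymAbs lam (x i - m) + (if x i ≤ m then c - m else -(lam * (c - m)))
      ≤ asymAbs lam (x i - c) := fun i _ => by
    unfold asymAbs
    split_ifs <;> nlinarith
  have hgain : 0 ≤ ∑ i ∈ s, (if x i ≤ m then c - m else -(lam * (c - m))) := by
    simp only [sum_ite, sum_const, nsmul_eq_mul, not_le]
    nlinarith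
  have hsum := sum_le_sum hstep
  rw [sum_add_distrib] at hsum
  linarith

lemma sum_asymAbs_sub_le_of_ge (hlam : -1 ≤ lam) (hcm : c ≤ m)
    (hbal : #{i ∈ s | x i < m} ≤ lam * #{i ∈ s | m ≤ x i}) :
    ∑ i ∈ s, asymAbs lam (x i - m) ≤ ∑ i ∈ s, asymAbs lam (x i - c) := by
  have hstep : ∀ i ∈ s, asymAbs lam (x i - m) + (if m ≤ x i then lam * (m - c) else -(m - c))
      ≤ asymAbs lam (x i - c) := fun i _ => by
    unfold asymAbs
    split_ifs <;> nlinarith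
  have hgain : 0 ≤ ∑ i ∈ s, (if m ≤ x i then lam * (m - c) else -(m - c)) := by
    simp only [sum_ite, sum_const, nsmul_eq_mul, not_le]
    nlinarith
  have hsum := sum_le_sum hstep
  rw [sum_add_distrib] at hsum
  linarith

end Balance

lemma balanceFun_le_asymNorm_sub_const {N : ℕ} {lam : ℝ} (hlam : -1 < lam)
    (hk : ⌊(N : ℝ) / (lam + 1)⌋₊ < N) (f : Fin N → ℝ) (c : ℝ) :
    balanceFun N lam f ≤ asymNorm N lam (fun i => f i - c) := by
  set k := ⌊(N : ℝ) / (lam + 1)⌋₊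
  set m := lamMedian N lam f
  have hpos : 0 < lam + 1 := by linarith
  have hkN : (k : ℝ) * (lam + 1) ≤ N :=
    (le_div_iff₀ hpos).1 (Nat.floor_le (div_nonneg N.cast_nonneg hpos.le))
  have hNk : (N : ℝ) < (k + 1) * (lam + 1) := (div_lt_iff₀ hpos).1 (Nat.lt_floor_add_one _)
  have hgt : (#{i | m < f i} : ℝ) ≤ k := by exact_mod_cast card_lamMedian_lt_le f hk
  have hge : (k : ℝ) + 1 ≤ #{i | m ≤ f i} := by exact_mod_cast succ_le_card_lamMedian_le f hk
  have hsplit_gt : (#{i | m < f i} : ℝ) + #{i | f i ≤ m} = N := by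
    have := card_filter_add_card_filter_not (s := univ) fun i => m < f i
    simp only [not_lt, card_univ, Fintype.card_fin] at this
    exact_mod_cast this
  have hsplit_ge : (#{i | f i < m} : ℝ) + #{i | m ≤ f i} = N := by
    have := card_filter_add_card_filter_not (s := univ) fun i => m ≤ f i
    simp only [not_le, card_univ, Fintype.card_fin] at this
    rw [add_comm]
    exact_mod_cast this
  rcases le_total m c with hmc | hcm
  · exact sum_asymAbs_sub_le_of_le univ f hlam.le hmc (by nlinarith)
  · exact sum_asymAbs_sub_le_of_ge univ f hlam.le hcm (by nlinarith)

theorem balanceFun_convex_general (N : ℕ) (lam : ℝ) (hlam : 0 < lam)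
    (hk : Nat.floor ((N : ℝ) / (lam + 1)) + 1 ≤ N) :
    ConvexOn ℝ Set.univ (balanceFun N lam) := by
  refine ⟨convex_univ, fun f _ g _ a b ha hb hab => ?_⟩
  set mf := lamMedian N lam f
  set mg := lamMedian N lam g
  calc balanceFun N lam (a • f + b • g)
      ≤ asymNorm N lam (fun i => (a • f + b • g) i - (a * mf + b * mg)) :=
        balanceFun_le_asymNorm_sub_const (by linarith) hk _ _
    _ = asymNorm N lam (a • (fun i => f i - mf) + b • (fun i => g i - mg)) := by
        congr 1
        ext i
        simp only [Pi.add_apply, Pi.smul_apply, smul_eq_mul]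
        ring
    _ ≤ a * balanceFun N lam f + b * balanceFun N lam g :=
        (convexOn_asymNorm N (by linarith)).2 trivial trivial ha hb hab

/-- the balance functional `B(f) = ‖f − med_λ(f)·1‖_{1,λ}` is convex on ℝ^N. -/
theorem balanceFun_convex (N : ℕ) (hN : 0 < N) (lam : ℝ) (hlam : 0 < lam)
    (hk : Nat.floor ((N : ℝ) / (lam + 1)) + 1 ≤ N) :
    ConvexOn ℝ Set.univ (balanceFun N lam) :=
  balanceFun_convex_general N lam hlam hk
end

section
/- Let E be a finite-dimensional real inner product space, C ⊆ E a nonempty convex set, 𝓣 : E → ℝ a convex function, F ∈ C, and V ∈ E. Suppose F' ∈ C minimizes G ↦ 𝓣(G) + (1/2)‖G − (F + V)‖² over C. Then 𝓣(F) ≥ 𝓣(F') + ‖F − F'‖² + ⟨F − F', V⟩. -/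
/-!
Moving `F'` a fraction `t` of the way towards `F` stays in `C`. Comparing the objective there with
its minimum, using convexity of `𝓣` and expanding the square, and letting `t → 0` gives the
first-order optimality condition `𝓣(F') + ⟨F + V - F', F - F'⟩ ≤ 𝓣(F)`, which is the claim.
-/

open Filter Topology RealInnerProductSpace

theorem nonpos_of_forall_le_mul {a b : ℝ} (h : ∀ t : ℝ, 0 < t → t ≤ 1 → a ≤ t * b) : a ≤ 0 := by
  have hlim : Tendsto (fun t : ℝ => t * b) (𝓝[>] 0) (𝓝 0) :=
    tendsto_nhdsWithin_of_tendsto_nhds (by simpa using (continuous_mul_const b).tendsto 0)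
  refine ge_of_tendsto hlim ?_
  filter_upwards [Ioc_mem_nhdsGT zero_lt_one] with t ht using h t ht.1 ht.2

section

variable {E : Type*} [NormedAddCommGroup E] [InnerProductSpace ℝ E]

theorem ConvexOn.add_inner_le_of_isMinOn_add_half_norm_sub_sq {C : Set E} {f : E → ℝ}
    (hf : ConvexOn ℝ C f) {x y z : E} (hx : x ∈ C) (hz : z ∈ C)
    (hmin : IsMinOn (fun w => f w + 1 / 2 * ‖w - y‖ ^ 2) C x) :
    f x + ⟪y - x, z - x⟫ ≤ f z := by
  suffices f x + ⟪y - x, z - x⟫ - f z ≤ 0 by linarith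
  refine nonpos_of_forall_le_mul (b := ‖z - x‖ ^ 2 / 2) fun t ht0 ht1 => ?_
  have hmem : x + t • (z - x) ∈ C := hf.1.add_smul_sub_mem hx hz ⟨ht0.le, ht1⟩
  have hconv : f (x + t • (z - x)) ≤ (1 - t) * f x + t * f z := by
    have := hf.2 hx hz (sub_nonneg.2 ht1) ht0.le (sub_add_cancel 1 t)
    rwa [show (1 - t) • x + t • z = x + t • (z - x) by module] at this
  have hsq : ‖x + t • (z - x) - y‖ ^ 2
      = ‖x - y‖ ^ 2 + 2 * t * ⟪x - y, z - x⟫ + t ^ 2 * ‖z - x‖ ^ 2 := by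
    rw [show x + t • (z - x) - y = (x - y) + t • (z - x) by abel, norm_add_sq_real,
      real_inner_smul_right, norm_smul, mul_pow, Real.norm_of_nonneg ht0.le]
    ring
  have hopt := isMinOn_iff.1 hmin _ hmem
  simp only [hsq] at hopt
  have hflip : ⟪y - x, z - x⟫ = -⟪x - y, z - x⟫ := by
    rw [← inner_neg_left, neg_sub]
  rw [hflip]
  refine le_of_mul_le_mul_left ?_ ht0
  linarith

end

theorem prox_step_inequality_general {E : Type*} [NormedAddCommGroup E]
    [InnerProductSpace ℝ E]
    (C : Set E) (hCconv : Convex ℝ C)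
    (T : E → ℝ) (hT : ConvexOn ℝ Set.univ T)
    (F V F' : E) (hF : F ∈ C) (hF' : F' ∈ C)
    (hmin : ∀ G ∈ C, T F' + (1 / 2) * ‖F' - (F + V)‖ ^ 2 ≤
        T G + (1 / 2) * ‖G - (F + V)‖ ^ 2) :
    T F ≥ T F' + ‖F - F'‖ ^ 2 + (inner ℝ (F - F') V : ℝ) := by
  have key := (hT.subset (Set.subset_univ C) hCconv).add_inner_le_of_isMinOn_add_half_norm_sub_sq
    hF' hF (isMinOn_iff.2 hmin)
  have hsplit : ⟪F + V - F', F - F'⟫ = ‖F - F'‖ ^ 2 + ⟪F - F', V⟫ := by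
    rw [show F + V - F' = (F - F') + V by abel, inner_add_left, real_inner_self_eq_norm_sq,
      real_inner_comm]
  linarith

/-- if `F' ∈ C` minimizes `G ↦ 𝓣(G) + (1/2)‖G − (F + V)‖²` over the
nonempty convex set `C`, `𝓣` convex, `F ∈ C`, then
`𝓣(F) ≥ 𝓣(F') + ‖F − F'‖² + ⟨F − F', V⟩`. -/
theorem prox_step_inequality {E : Type*} [NormedAddCommGroup E]
    [InnerProductSpace ℝ E] [FiniteDimensional ℝ E]
    (C : Set E) (hCne : C.Nonempty) (hCconv : Convex ℝ C)
    (T : E → ℝ) (hT : ConvexOn ℝ Set.univ T)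
    (F V F' : E) (hF : F ∈ C) (hF' : F' ∈ C)
    (hmin : ∀ G ∈ C, T F' + (1 / 2) * ‖F' - (F + V)‖ ^ 2 ≤
        T G + (1 / 2) * ‖G - (F + V)‖ ^ 2) :
    T F ≥ T F' + ‖F - F'‖ ^ 2 + (inner ℝ (F - F') V : ℝ) :=
  prox_step_inequality_general C hCconv T hT F V F' hF hF' hmin
end

section
/- Let E be a finite-dimensional real inner product space, C ⊆ E a nonempty convex set, and 𝓣, 𝓑 : E → ℝ convex functions. Let F ∈ C with 𝓣(F) = 𝓑(F), let V be a subgradient of 𝓑 at F (i.e., 𝓑(G) ≥ 𝓑(F) + ⟨G − F, V⟩ for all G ∈ E), and suppose F' ∈ C minimizes G ↦ 𝓣(G) + (1/2)‖G − (F + V)‖² over C. Then 𝓑(F') ≥ 𝓣(F') + ‖F − F'‖². -/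
/-!
The minimality of `F'` for the proximal objective, tested along the segment from `F'` to `F`
and combined with convexity of `𝓣`, yields in the limit the variational inequality
`𝓣(F') ≤ 𝓣(F) + ⟪F' - (F + V), F - F'⟫ = 𝓣(F) + ⟪F' - F, V⟫ - ‖F - F'‖²`.
The subgradient inequality at `F'` together with `𝓣(F) = 𝓑(F)` bounds the right-hand side
by `𝓑(F') - ‖F - F'‖²`.
-/

open Filter Topology Set

lemma le_of_forall_mem_Ioc_le_add_mul {a b c : ℝ} (h : ∀ t ∈ Ioc (0 : ℝ) 1, a ≤ b + t * c) :
    a ≤ b := by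
  have hlim : Tendsto (fun t : ℝ ↦ b + t * c) (𝓝[>] 0) (𝓝 b) :=
    ((by fun_prop : Continuous fun t : ℝ ↦ b + t * c).tendsto' 0 b (by simp)).mono_left
      nhdsWithin_le_nhds
  exact ge_of_tendsto hlim (eventually_of_mem (Ioc_mem_nhdsGT one_pos) h)

section Prox

variable {E : Type*} [NormedAddCommGroup E] [InnerProductSpace ℝ E]

lemma norm_add_smul_sub_sq (x y Z : E) (t : ℝ) :
    ‖x + t • (y - x) - Z‖ ^ 2
      = ‖x - Z‖ ^ 2 + 2 * t * inner ℝ (x - Z) (y - x) + t ^ 2 * ‖y - x‖ ^ 2 := by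
  rw [show x + t • (y - x) - Z = (x - Z) + t • (y - x) by abel, norm_add_sq_real,
    real_inner_smul_right, norm_smul, mul_pow, Real.norm_eq_abs, sq_abs]
  ring

theorem ConvexOn.le_add_inner_of_isMinOn_add_half_sq {C : Set E} {T : E → ℝ} {Z x y : E}
    (hT : ConvexOn ℝ C T) (hx : x ∈ C)
    (hmin : IsMinOn (fun G ↦ T G + (1 / 2) * ‖G - Z‖ ^ 2) C x) (hy : y ∈ C) :
    T x ≤ T y + inner ℝ (x - Z) (y - x) := by
  refine le_of_forall_mem_Ioc_le_add_mul (c := ‖y - x‖ ^ 2 / 2) fun t ⟨ht0, ht1⟩ ↦ ?_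
  have hseg : (1 - t) • x + t • y = x + t • (y - x) := by module
  have hconv : T (x + t • (y - x)) ≤ (1 - t) * T x + t * T y := by
    simpa only [hseg, smul_eq_mul] using
      hT.2 hx hy (sub_nonneg.mpr ht1) ht0.le (sub_add_cancel 1 t)
  have hle := isMinOn_iff.mp hmin _ (hseg ▸ hT.1 hx hy (sub_nonneg.mpr ht1) ht0.le
    (sub_add_cancel 1 t))
  rw [norm_add_smul_sub_sq] at hle
  have hmul : t * T x ≤ t * (T y + inner ℝ (x - Z) (y - x) + t * (‖y - x‖ ^ 2 / 2)) := by
    nlinarith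
  exact le_of_mul_le_mul_left hmul ht0

end Prox

theorem prox_step_descent_general {E : Type*} [NormedAddCommGroup E]
    [InnerProductSpace ℝ E]
    (C : Set E) (hCconv : Convex ℝ C)
    (T B : E → ℝ) (hT : ConvexOn ℝ Set.univ T)
    (F V F' : E) (hF : F ∈ C) (hTB : T F = B F)
    (hsub : ∀ G : E, B G ≥ B F + (inner ℝ (G - F) V : ℝ))
    (hF' : F' ∈ C)
    (hmin : ∀ G ∈ C, T F' + (1 / 2) * ‖F' - (F + V)‖ ^ 2 ≤
        T G + (1 / 2) * ‖G - (F + V)‖ ^ 2) :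
    B F' ≥ T F' + ‖F - F'‖ ^ 2 := by
  have hvar : T F' ≤ T F + inner ℝ (F' - (F + V)) (F - F') :=
    (hT.subset (subset_univ C) hCconv).le_add_inner_of_isMinOn_add_half_sq hF'
      (isMinOn_iff.mpr hmin) hF
  have hinner : inner ℝ (F' - (F + V)) (F - F') = inner ℝ (F' - F) V - ‖F - F'‖ ^ 2 := by
    rw [show F' - (F + V) = -(F - F') - V by abel, inner_sub_left, inner_neg_left,
      real_inner_self_eq_norm_sq, real_inner_comm V, show F - F' = -(F' - F) by abel,
      inner_neg_right]
    ring
  linarith [hsub F']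

/-- let `𝓣, 𝓑` be convex, `F ∈ C` with `𝓣(F) = 𝓑(F)`, `V` a subgradient
of `𝓑` at `F`, and suppose `F' ∈ C` minimizes `G ↦ 𝓣(G) + (1/2)‖G − (F + V)‖²` over the
nonempty convex set `C`. Then `𝓑(F') ≥ 𝓣(F') + ‖F − F'‖²`. -/
theorem prox_step_descent {E : Type*} [NormedAddCommGroup E]
    [InnerProductSpace ℝ E] [FiniteDimensional ℝ E]
    (C : Set E) (hCne : C.Nonempty) (hCconv : Convex ℝ C)
    (T B : E → ℝ) (hT : ConvexOn ℝ Set.univ T) (hB : ConvexOn ℝ Set.univ B)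
    (F V F' : E) (hF : F ∈ C) (hTB : T F = B F)
    (hsub : ∀ G : E, B G ≥ B F + (inner ℝ (G - F) V : ℝ))
    (hF' : F' ∈ C)
    (hmin : ∀ G ∈ C, T F' + (1 / 2) * ‖F' - (F + V)‖ ^ 2 ≤
        T G + (1 / 2) * ‖G - (F + V)‖ ^ 2) :
    B F' ≥ T F' + ‖F - F'‖ ^ 2 :=
  prox_step_descent_general C hCconv T B hT F V F' hF hTB hsub hF' hmin
end
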